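/- Let a, b, c be integers with a ≥ 1, b ≥ 0 and c ≥ 1, and let G = G^{(3)}_{a,b,c} be the graph described below. Then |V(G)| = 2a + 2b + c + 2, ind-match(G) = b + 2, and min-match(G) = match(G) = a + b + 1. -/

import Mathlib

namespace MatchingPaper

variable {V : Type*}

/-- `M` is a matching of `G` : a finite set of edges of `G` that are pairwise disjoint. -/
def IsMatching (G : SimpleGraph V) (M : Finset (Sym2 V)) : Prop :=
  (↑M : Set (Sym2 V)) ⊆ G.edgeSet ∧
    ∀ e ∈ M, ∀ f ∈ M, e ≠ f → ∀ v : V, v ∈ e → v ∉ f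

open Classical in
/-- `M` is a maximal matching of `G` : adding any further edge of `G` destroys
the matching property. -/
def IsMaximalMatching (G : SimpleGraph V) (M : Finset (Sym2 V)) : Prop :=
  IsMatching G M ∧ ∀ e ∈ G.edgeSet, e ∉ M → ¬ IsMatching G (insert e M)

/-- `M` is an induced matching of `G` : a matching such that no edge of `G`
meets two distinct edges of `M`. -/
def IsInducedMatching (G : SimpleGraph V) (M : Finset (Sym2 V)) : Prop :=
  IsMatching G M ∧
    ∀ e ∈ M, ∀ f ∈ M, e ≠ f → ∀ g ∈ G.edgeSet,
      (∃ v : V, v ∈ g ∧ v ∈ e) → ¬ ∃ v : V, v ∈ g ∧ v ∈ f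

/-- The matching number `match(G)` : the maximum size of a matching of `G`. -/
noncomputable def matchNum (G : SimpleGraph V) : ℕ :=
  sSup {n : ℕ | ∃ M : Finset (Sym2 V), IsMatching G M ∧ M.card = n}

/-- The minimum matching number `min-match(G)` : the minimum size of a maximal
matching of `G`. -/
noncomputable def minMatchNum (G : SimpleGraph V) : ℕ :=
  sInf {n : ℕ | ∃ M : Finset (Sym2 V), IsMaximalMatching G M ∧ M.card = n}

/-- The induced matching number `ind-match(G)` : the maximum size of an induced
matching of `G`. -/
noncomputable def indMatchNum (G : SimpleGraph V) : ℕ :=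
  sSup {n : ℕ | ∃ M : Finset (Sym2 V), IsInducedMatching G M ∧ M.card = n}

/-- The graph `G^{(3)}_{a,b,c}` : a complete graph on `X = {x_1, …, x_{2a}}`
(first summand), edges `{y_i, y_{b+i}}` for `1 ≤ i ≤ b` (`Y` is the second
summand, a disjoint union of `b` edges), a vertex `v` (fourth summand,
`Sum.inr (Sum.inr (Sum.inr (Sum.inl ())))`) joined to every `z_i`
(`Z` is the third summand), and a vertex `w` (last summand) joined to every
vertex of `X ∪ Y ∪ {v}`. Vertices are 0-indexed. -/
def G3 (a b c : ℕ) : SimpleGraph (Fin (2 * a) ⊕ Fin (2 * b) ⊕ Fin c ⊕ Unit ⊕ Unit) :=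
  SimpleGraph.fromRel fun p q =>
    match p, q with
    | Sum.inl i, Sum.inl j => i ≠ j
    | Sum.inr (Sum.inl i), Sum.inr (Sum.inl j) => (i : ℕ) < b ∧ (j : ℕ) = (i : ℕ) + b
    | Sum.inr (Sum.inr (Sum.inr (Sum.inl _))), Sum.inr (Sum.inr (Sum.inl _)) => True
    | Sum.inr (Sum.inr (Sum.inr (Sum.inr _))), Sum.inl _ => True
    | Sum.inr (Sum.inr (Sum.inr (Sum.inr _))), Sum.inr (Sum.inl _) => True
    | Sum.inr (Sum.inr (Sum.inr (Sum.inr _))), Sum.inr (Sum.inr (Sum.inr (Sum.inl _))) => True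
    | _, _ => False

/-!
Upper bounds. An edge at some `z_k` contains `v`, so all edges of a matching but at most one
avoid `Z ∪ {v}`, and those are disjoint pairs among the remaining `2a + 2b + 1` vertices. An
induced matching meets each clique `X`, `{v, w}`, `{y_i, y_{b+i}}` in at most one edge, and
every edge of `G` meets one of these cliques.

Lower bound for maximal matchings: a maximal matching leaves at most one vertex of the clique
`X` uncovered, meets every edge `y_i y_{b+i}` and covers `v` (else `v z_1` could be added). No
edge meets two of `X`, `Y`, `{v}`, an edge contains at most two vertices of `X` and meets at
most one pair `{y_i, y_{b+i}}`, so at least `a + b + 1` edges are needed.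

A perfect matching of `X`, the `b` edges of `Y` and `v z_1` attain both bounds on matchings;
keeping a single edge of `X` gives an induced matching of size `b + 2`.
-/

section General

variable {G : SimpleGraph V} {M N : Finset (Sym2 V)} {e f : Sym2 V} {u u' : V}

theorem eq_or_adj_of_mem_edgeSet (he : e ∈ G.edgeSet) (hu : u ∈ e) (hu' : u' ∈ e) :
    u = u' ∨ G.Adj u u' := by
  by_cases h : u = u'
  · exact Or.inl h
  · exact Or.inr (G.adj_iff_exists_edge.2 ⟨h, e, he, hu, hu'⟩)

theorem card_filter_mem_sym2_le_two [DecidableEq V] {ι : Type*} {φ : ι → V}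
    (hφ : Function.Injective φ) (s : Finset ι) (e : Sym2 V) : (s.filter (φ · ∈ e)).card ≤ 2 := by
  induction e using Sym2.ind with
  | _ p q =>
    calc (s.filter (φ · ∈ s(p, q))).card ≤ ({p, q} : Finset V).card :=
          Finset.card_le_card_of_injOn φ (fun i hi => by simpa using (Finset.mem_filter.1 hi).2)
            hφ.injOn
      _ ≤ 2 := Finset.card_le_two

theorem IsMatching.mono (hM : IsMatching G M) (hNM : N ⊆ M) : IsMatching G N :=
  ⟨(Finset.coe_subset.2 hNM).trans hM.1, fun e he f hf => hM.2 e (hNM he) f (hNM hf)⟩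

theorem IsMatching.eq_of_mem_of_mem (hM : IsMatching G M) (he : e ∈ M) (hf : f ∈ M)
    (hue : u ∈ e) (huf : u ∈ f) : e = f :=
  by_contra fun hne => hM.2 e he f hf hne u hue huf

theorem IsMatching.insert [DecidableEq (Sym2 V)] (hM : IsMatching G M) (he : e ∈ G.edgeSet)
    (hfree : ∀ u ∈ e, ∀ f ∈ M, u ∉ f) : IsMatching G (insert e M) := by
  refine ⟨by simpa using Set.insert_subset he hM.1, fun f₁ hf₁ f₂ hf₂ hne u hu₁ hu₂ => ?_⟩
  rcases Finset.mem_insert.1 hf₁ with h₁ | hf₁ <;> rcases Finset.mem_insert.1 hf₂ with h₂ | hf₂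
  · exact hne (h₁.trans h₂.symm)
  · exact hfree u (h₁ ▸ hu₁) f₂ hf₂ hu₂
  · exact hfree u (h₂ ▸ hu₂) f₁ hf₁ hu₁
  · exact hM.2 f₁ hf₁ f₂ hf₂ hne u hu₁ hu₂

theorem IsMatching.card_filter_mem_le_one [DecidableEq V] (hM : IsMatching G M) (u : V) :
    (M.filter (u ∈ ·)).card ≤ 1 :=
  Finset.card_le_one.2 fun _ he _ hf => hM.eq_of_mem_of_mem (Finset.mem_filter.1 he).1
    (Finset.mem_filter.1 hf).1 (Finset.mem_filter.1 he).2 (Finset.mem_filter.1 hf).2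

theorem IsMatching.two_mul_card_le [DecidableEq V] (hM : IsMatching G M) {s : Finset V}
    (hs : ∀ e ∈ M, ∀ u ∈ e, u ∈ s) : 2 * M.card ≤ s.card := by
  have hedge (e) (he : e ∈ M) : 2 ≤ (s.bipartiteBelow (· ∈ ·) e).card := by
    induction e using Sym2.ind with
    | _ p q =>
      calc 2 = ({p, q} : Finset V).card := (Finset.card_pair (G.ne_of_adj (hM.1 he))).symm
        _ ≤ _ := Finset.card_le_card <| by
          simp [Finset.insert_subset_iff, Finset.mem_bipartiteBelow, hs _ he]
  have := Finset.card_mul_le_card_mul' (· ∈ ·) hedge fun u _ => hM.card_filter_mem_le_one u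
  omega

open Classical in
theorem isMaximalMatching_iff : IsMaximalMatching G M ↔
    IsMatching G M ∧ ∀ u u', G.Adj u u' → ∃ e ∈ M, u ∈ e ∨ u' ∈ e := by
  refine ⟨fun ⟨hM, hmax⟩ => ⟨hM, fun u u' h => ?_⟩, fun ⟨hM, hcov⟩ => ⟨hM, fun e he heM hins => ?_⟩⟩
  · by_contra! hfree
    have he : s(u, u') ∈ G.edgeSet := h
    refine hmax _ he (fun hM' => (hfree _ hM').1 (Sym2.mem_mk_left _ _)) (hM.insert he ?_)
    intro p hp f hf
    rcases Sym2.mem_iff.1 hp with rfl | rfl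
    exacts [(hfree f hf).1, (hfree f hf).2]
  · induction e using Sym2.ind with
    | _ p q =>
      obtain ⟨f, hf, hpf⟩ := hcov p q he
      have hne : s(p, q) ≠ f := fun h => heM (h ▸ hf)
      rcases hpf with hpf | hpf
      · exact hins.2 _ (Finset.mem_insert_self _ _) f (Finset.mem_insert_of_mem hf) hne p
          (Sym2.mem_mk_left _ _) hpf
      · exact hins.2 _ (Finset.mem_insert_self _ _) f (Finset.mem_insert_of_mem hf) hne q
          (Sym2.mem_mk_right _ _) hpf

theorem IsMaximalMatching.eq_of_isClique {K : Set V} (hM : IsMaximalMatching G M)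
    (hK : G.IsClique K) (hu : u ∈ K) (hu' : u' ∈ K) (hfree : ∀ e ∈ M, u ∉ e)
    (hfree' : ∀ e ∈ M, u' ∉ e) : u = u' := by
  by_contra hne
  obtain ⟨e, he, hue | hue⟩ := (isMaximalMatching_iff.1 hM).2 u u' (hK hu hu' hne)
  exacts [hfree e he hue, hfree' e he hue]

theorem isInducedMatching_iff : IsInducedMatching G M ↔
    IsMatching G M ∧ ∀ e ∈ M, ∀ f ∈ M, ∀ u ∈ e, ∀ u' ∈ f, G.Adj u u' → e = f := by
  refine ⟨fun ⟨hM, hind⟩ => ⟨hM, fun e he f hf u hu u' hu' h => ?_⟩,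
    fun ⟨hM, hind⟩ => ⟨hM, fun e he f hf hne g hg ⟨u, hug, hue⟩ ⟨u', hu'g, hu'f⟩ => ?_⟩⟩
  · by_contra hne
    exact hind e he f hf hne _ h ⟨u, Sym2.mem_mk_left _ _, hu⟩ ⟨u', Sym2.mem_mk_right _ _, hu'⟩
  · rcases eq_or_adj_of_mem_edgeSet hg hug hu'g with rfl | h
    · exact hM.2 e he f hf hne u hue hu'f
    · exact hne (hind e he f hf u hue u' hu'f h)

theorem IsInducedMatching.eq_of_isClique {K : Set V} (hM : IsInducedMatching G M)
    (hK : G.IsClique K) (he : e ∈ M) (hf : f ∈ M) (hu : u ∈ K) (hu' : u' ∈ K) (hue : u ∈ e)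
    (hu'f : u' ∈ f) : e = f := by
  obtain ⟨hM, hind⟩ := isInducedMatching_iff.1 hM
  by_cases h : u = u'
  · exact hM.eq_of_mem_of_mem he hf hue (h ▸ hu'f)
  · exact hind e he f hf u hue u' hu'f (hK hu hu' h)

end General

namespace G3

variable {a b c : ℕ}

abbrev Vert (a b c : ℕ) := Fin (2 * a) ⊕ Fin (2 * b) ⊕ Fin c ⊕ Unit ⊕ Unit

abbrev x (i : Fin (2 * a)) : Vert a b c := Sum.inl i
abbrev y (j : Fin (2 * b)) : Vert a b c := Sum.inr (Sum.inl j)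
abbrev z (k : Fin c) : Vert a b c := Sum.inr (Sum.inr (Sum.inl k))
abbrev v : Vert a b c := Sum.inr (Sum.inr (Sum.inr (Sum.inl ())))
abbrev w : Vert a b c := Sum.inr (Sum.inr (Sum.inr (Sum.inr ())))

theorem card_vert : Fintype.card (Vert a b c) = 2 * a + 2 * b + c + 2 := by
  simp only [Fintype.card_sum, Fintype.card_fin, Fintype.card_unit]
  ring

theorem adj_x_x {i j : Fin (2 * a)} : (G3 a b c).Adj (x i) (x j) ↔ i ≠ j := by
  simp [G3, eq_comm]

theorem adj_y_y {j j' : Fin (2 * b)} : (G3 a b c).Adj (y j) (y j') ↔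
    ((j : ℕ) < b ∧ (j' : ℕ) = j + b) ∨ ((j' : ℕ) < b ∧ (j : ℕ) = j' + b) := by
  simp only [G3, SimpleGraph.fromRel_adj, ne_eq, Sum.inr.injEq, Sum.inl.injEq,
    and_iff_right_iff_imp]
  rintro (⟨-, h⟩ | ⟨-, h⟩) rfl <;> omega

theorem adj_z {k : Fin c} {p : Vert a b c} : (G3 a b c).Adj (z k) p ↔ p = v := by
  rcases p with _ | _ | _ | ⟨⟨⟩⟩ | ⟨⟨⟩⟩ <;> simp [G3]

theorem adj_v_w : (G3 a b c).Adj v w := by simp [G3]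

theorem not_adj_x_y (i : Fin (2 * a)) (j : Fin (2 * b)) : ¬ (G3 a b c).Adj (x i) (y j) := by
  simp [G3]

theorem not_adj_x_v (i : Fin (2 * a)) : ¬ (G3 a b c).Adj (x i) v := by simp [G3]

theorem not_adj_y_v (j : Fin (2 * b)) : ¬ (G3 a b c).Adj (y j) v := by simp [G3]

theorem isClique_range_x : (G3 a b c).IsClique (Set.range x) := by
  rintro _ ⟨i, rfl⟩ _ ⟨j, rfl⟩ hij
  exact adj_x_x.2 fun h => hij (congrArg _ h)

theorem v_mem_of_z_mem {e : Sym2 (Vert a b c)} {k : Fin c} (he : e ∈ (G3 a b c).edgeSet)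
    (hk : z k ∈ e) : v ∈ e := by
  obtain ⟨p, rfl⟩ := Sym2.mem_iff_exists.1 hk
  obtain rfl : p = v := adj_z.1 ((G3 a b c).mem_edgeSet.1 he)
  exact Sym2.mem_mk_right _ _

-- The ends `y_{i+1}`, `y_{b+i+1}` of the `(i+1)`-st edge of `Y` (vertices are 0-indexed).
abbrev y₀ (i : Fin b) : Vert a b c := y ⟨i, by omega⟩
abbrev y₁ (i : Fin b) : Vert a b c := y ⟨i + b, by omega⟩

theorem adj_y₀_y₁ (i : Fin b) : (G3 a b c).Adj (y₀ i) (y₁ i) := adj_y_y.2 (Or.inl ⟨i.2, rfl⟩)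

theorem exists_y_eq_y₀_or_y₁ (j : Fin (2 * b)) :
    ∃ i : Fin b, (y j : Vert a b c) = y₀ i ∨ (y j : Vert a b c) = y₁ i := by
  by_cases hj : (j : ℕ) < b
  · exact ⟨⟨j, hj⟩, Or.inl rfl⟩
  · refine ⟨⟨j - b, by omega⟩, Or.inr ?_⟩
    simp only [Sum.inr.injEq, Sum.inl.injEq, Fin.ext_iff]
    omega

theorem eq_of_pair_mem {e : Sym2 (Vert a b c)} (he : e ∈ (G3 a b c).edgeSet) {i i' : Fin b}
    (hi : y₀ i ∈ e ∨ y₁ i ∈ e) (hi' : y₀ i' ∈ e ∨ y₁ i' ∈ e) : i = i' := by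
  apply Fin.ext
  rcases hi with hi | hi <;> rcases hi' with hi' | hi' <;>
    rcases eq_or_adj_of_mem_edgeSet he hi hi' with h | h <;>
    simp only [adj_y_y, Sum.inr.injEq, Sum.inl.injEq, Fin.ext_iff] at h <;> omega

theorem exists_pair_mem {e : Sym2 (Vert a b c)} (he : e ∈ (G3 a b c).edgeSet)
    (hx : ∀ i, x i ∉ e) (hv : v ∉ e) (hw : w ∉ e) : ∃ i : Fin b, y₀ i ∈ e ∨ y₁ i ∈ e := by
  induction e using Sym2.ind with
  | _ p q =>
    rcases p with i | j | k | ⟨⟨⟩⟩ | ⟨⟨⟩⟩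
    · exact absurd (Sym2.mem_mk_left _ _) (hx i)
    · obtain ⟨i, hi | hi⟩ := exists_y_eq_y₀_or_y₁ (a := a) (c := c) j
      · exact ⟨i, Or.inl (hi ▸ Sym2.mem_mk_left _ _)⟩
      · exact ⟨i, Or.inr (hi ▸ Sym2.mem_mk_left _ _)⟩
    · exact absurd (v_mem_of_z_mem he (Sym2.mem_mk_left _ _)) hv
    · exact absurd (Sym2.mem_mk_left _ _) hv
    · exact absurd (Sym2.mem_mk_left _ _) hw

variable {M : Finset (Sym2 (Vert a b c))}

theorem card_le_of_isMatching (hM : IsMatching (G3 a b c) M) : M.card ≤ a + b + 1 := by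
  set S : Finset (Vert a b c) := Finset.univ \ insert v (Finset.univ.image z)
  have hS : S.card = 2 * a + 2 * b + 1 := by
    rw [Finset.card_sdiff_of_subset (Finset.subset_univ _), Finset.card_univ, card_vert,
      Finset.card_insert_of_notMem (by simp),
      Finset.card_image_of_injective _ fun k k' h => by simpa using h, Finset.card_univ,
      Fintype.card_fin]
    omega
  have hv : (M.filter (v ∈ ·)).card ≤ 1 := hM.card_filter_mem_le_one v
  have hrest : 2 * (M.filter (v ∉ ·)).card ≤ S.card :=
    (hM.mono (Finset.filter_subset _ _)).two_mul_card_le fun e he u hu => by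
      obtain ⟨heM, hve⟩ := Finset.mem_filter.1 he
      simp only [S, Finset.mem_sdiff, Finset.mem_univ, Finset.mem_insert, Finset.mem_image,
        true_and, not_or, not_exists]
      exact ⟨fun h => hve (h ▸ hu), fun k hk => hve (v_mem_of_z_mem (hM.1 heM) (hk ▸ hu))⟩
  have := Finset.card_filter_add_card_filter_not (s := M) (p := (v ∈ ·))
  omega

theorem exists_v_mem_of_isMaximalMatching (hM : IsMaximalMatching (G3 a b c) M) (k : Fin c) :
    ∃ e ∈ M, v ∈ e := by
  obtain ⟨e, he, h | h⟩ := (isMaximalMatching_iff.1 hM).2 (z k) v (adj_z.2 rfl)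
  exacts [⟨e, he, v_mem_of_z_mem (hM.1.1 he) h⟩, ⟨e, he, h⟩]

theorem le_card_filter_x_mem (hM : IsMaximalMatching (G3 a b c) M) :
    a ≤ (M.filter fun e => ∃ i, x i ∈ e).card := by
  have hfree : (Finset.univ.filter fun i : Fin (2 * a) => ¬ ∃ e ∈ M, x i ∈ e).card ≤ 1 :=
    Finset.card_le_one.2 fun i hi j hj => by
      simp only [Finset.mem_filter, Finset.mem_univ, true_and, not_exists, not_and] at hi hj
      exact Sum.inl_injective (hM.eq_of_isClique isClique_range_x ⟨i, rfl⟩ ⟨j, rfl⟩ hi hj)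
  have hsplit := Finset.card_filter_add_card_filter_not (s := Finset.univ)
    (p := fun i : Fin (2 * a) => ∃ e ∈ M, x i ∈ e)
  rw [Finset.card_univ, Fintype.card_fin] at hsplit
  set covered := Finset.univ.filter fun i : Fin (2 * a) => ∃ e ∈ M, x i ∈ e
  have hcount := Finset.card_mul_le_card_mul (fun i e => x i ∈ e) (m := 1) (n := 2)
    (s := covered) (t := M.filter fun e => ∃ i, x i ∈ e)
    (fun i hi => by
      obtain ⟨e, he, hie⟩ := (Finset.mem_filter.1 hi).2
      exact Finset.card_pos.2
        ⟨e, (Finset.mem_bipartiteAbove _).2 ⟨Finset.mem_filter.2 ⟨he, i, hie⟩, hie⟩⟩)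
    (fun e _ => card_filter_mem_sym2_le_two Sum.inl_injective _ _)
  omega

theorem le_card_filter_y_mem (hM : IsMaximalMatching (G3 a b c) M) :
    b ≤ (M.filter fun e => ∃ j, y j ∈ e).card := by
  simpa using Finset.card_le_card_of_forall_subsingleton (s := Finset.univ)
    (t := M.filter fun e => ∃ j, y j ∈ e) (fun i e => y₀ i ∈ e ∨ y₁ i ∈ e)
    (fun i _ => by
      obtain ⟨e, he, hie⟩ := (isMaximalMatching_iff.1 hM).2 _ _ (adj_y₀_y₁ i)
      refine ⟨e, Finset.mem_filter.2 ⟨he, ?_⟩, hie⟩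
      rcases hie with h | h
      exacts [⟨_, h⟩, ⟨_, h⟩])
    (fun e he i hi i' hi' => eq_of_pair_mem (hM.1.1 (Finset.mem_filter.1 he).1) hi.2 hi'.2)

theorem le_card_of_isMaximalMatching (hc : 1 ≤ c) (hM : IsMaximalMatching (G3 a b c) M) :
    a + b + 1 ≤ M.card := by
  have hX := le_card_filter_x_mem hM
  have hY := le_card_filter_y_mem hM
  set MX := M.filter fun e => ∃ i, x i ∈ e
  set MY := M.filter fun e => ∃ j, y j ∈ e
  set MV := M.filter fun e => v ∈ e
  have hMV : 1 ≤ MV.card := by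
    obtain ⟨e, he, hv⟩ := exists_v_mem_of_isMaximalMatching hM ⟨0, hc⟩
    exact Finset.card_pos.2 ⟨e, Finset.mem_filter.2 ⟨he, hv⟩⟩
  have hXY : Disjoint MX MY := Finset.disjoint_filter.2 fun e he ⟨i, hi⟩ ⟨j, hj⟩ =>
    not_adj_x_y i j ((G3 a b c).adj_iff_exists_edge.2 ⟨by simp, e, hM.1.1 he, hi, hj⟩)
  have hXV : Disjoint MX MV := Finset.disjoint_filter.2 fun e he ⟨i, hi⟩ hv =>
    not_adj_x_v i ((G3 a b c).adj_iff_exists_edge.2 ⟨by simp, e, hM.1.1 he, hi, hv⟩)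
  have hYV : Disjoint MY MV := Finset.disjoint_filter.2 fun e he ⟨j, hj⟩ hv =>
    not_adj_y_v j ((G3 a b c).adj_iff_exists_edge.2 ⟨by simp, e, hM.1.1 he, hj, hv⟩)
  calc a + b + 1 ≤ MX.card + MY.card + MV.card := by omega
    _ = (MX ∪ MY ∪ MV).card := by
        rw [Finset.card_union_of_disjoint (Finset.disjoint_union_left.2 ⟨hXV, hYV⟩),
          Finset.card_union_of_disjoint hXY]
    _ ≤ M.card := Finset.card_le_card <| Finset.union_subset
        (Finset.union_subset (Finset.filter_subset _ _) (Finset.filter_subset _ _))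
        (Finset.filter_subset _ _)

theorem card_le_of_isInducedMatching (hM : IsInducedMatching (G3 a b c) M) :
    M.card ≤ b + 2 := by
  classical
  let P : Sym2 (Vert a b c) → Prop := fun e => ∃ i, x i ∈ e
  let Q : Sym2 (Vert a b c) → Prop := fun e => v ∈ e ∨ w ∈ e
  have hP : (M.filter P).card ≤ 1 := Finset.card_le_one.2 fun e he f hf => by
    obtain ⟨he, i, hi⟩ := Finset.mem_filter.1 he
    obtain ⟨hf, j, hj⟩ := Finset.mem_filter.1 hf
    exact hM.eq_of_isClique isClique_range_x he hf ⟨i, rfl⟩ ⟨j, rfl⟩ hi hj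
  have hQ : ((M.filter (¬ P ·)).filter Q).card ≤ 1 := Finset.card_le_one.2 fun e he f hf => by
    obtain ⟨he, hve⟩ := Finset.mem_filter.1 he
    obtain ⟨hf, hvf⟩ := Finset.mem_filter.1 hf
    have hK : (G3 a b c).IsClique {v, w} := SimpleGraph.isClique_pair.2 fun _ => adj_v_w
    rcases hve with hve | hve <;> rcases hvf with hvf | hvf <;>
      exact hM.eq_of_isClique hK (Finset.mem_filter.1 he).1 (Finset.mem_filter.1 hf).1
        (by simp) (by simp) hve hvf
  have hY : ((M.filter (¬ P ·)).filter (¬ Q ·)).card ≤ b := by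
    simpa using Finset.card_le_card_of_forall_subsingleton' (s := Finset.univ)
      (t := (M.filter (¬ P ·)).filter (¬ Q ·)) (fun i e => y₀ i ∈ e ∨ y₁ i ∈ e)
      (fun e he => by
        simp only [Finset.mem_filter, P, Q, not_exists, not_or] at he
        obtain ⟨i, hi⟩ := exists_pair_mem (hM.1.1 he.1.1) he.1.2 he.2.1 he.2.2
        exact ⟨i, Finset.mem_univ _, hi⟩)
      (fun i _ e ⟨he, hie⟩ f ⟨hf, hif⟩ => by
        have hK : (G3 a b c).IsClique {y₀ i, y₁ i} :=
          SimpleGraph.isClique_pair.2 fun _ => adj_y₀_y₁ i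
        replace he := (Finset.mem_filter.1 (Finset.mem_filter.1 he).1).1
        replace hf := (Finset.mem_filter.1 (Finset.mem_filter.1 hf).1).1
        rcases hie with hie | hie <;> rcases hif with hif | hif <;>
          exact hM.eq_of_isClique hK he hf (by simp) (by simp) hie hif)
  have := Finset.card_filter_add_card_filter_not (s := M) (p := P)
  have := Finset.card_filter_add_card_filter_not (s := M.filter (¬ P ·)) (p := Q)
  omega

def xEdge (i : Fin a) : Sym2 (Vert a b c) := s(x ⟨2 * i, by omega⟩, x ⟨2 * i + 1, by omega⟩)

def yEdge (i : Fin b) : Sym2 (Vert a b c) := s(y₀ i, y₁ i)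

def stdMatching (A : Finset (Fin a)) (k : Fin c) : Finset (Sym2 (Vert a b c)) :=
  insert s(v, z k) (A.image xEdge ∪ Finset.univ.image yEdge)

theorem mem_stdMatching {A : Finset (Fin a)} {k : Fin c} {e : Sym2 (Vert a b c)} :
    e ∈ stdMatching A k ↔ e = s(v, z k) ∨ (∃ i ∈ A, xEdge i = e) ∨ ∃ i, yEdge i = e := by
  simp [stdMatching]

theorem isMatching_stdMatching (A : Finset (Fin a)) (k : Fin c) :
    IsMatching (G3 a b c) (stdMatching A k) := by
  refine ⟨fun e he => ?_, fun e he f hf hne u hue huf => hne ?_⟩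
  · rcases mem_stdMatching.1 he with rfl | ⟨i, -, rfl⟩ | ⟨i, rfl⟩
    · exact (adj_z.2 rfl).symm
    · exact adj_x_x.2 (by simp [Fin.ext_iff])
    · exact adj_y₀_y₁ i
  · rcases mem_stdMatching.1 he with rfl | ⟨i, -, rfl⟩ | ⟨i, rfl⟩ <;>
    rcases mem_stdMatching.1 hf with rfl | ⟨j, -, rfl⟩ | ⟨j, rfl⟩ <;>
    simp only [xEdge, yEdge, Sym2.mem_iff] at hue huf <;>
    rcases hue with rfl | rfl <;> simp [Fin.ext_iff] at huf ⊢ <;>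
    exact congrArg _ (Fin.ext (by omega))

theorem card_stdMatching (A : Finset (Fin a)) (k : Fin c) :
    (stdMatching A k : Finset (Sym2 (Vert a b c))).card = A.card + b + 1 := by
  have hx : Function.Injective (xEdge : Fin a → Sym2 (Vert a b c)) := fun i j h => by
    simp only [xEdge, Sym2.eq_iff, Sum.inl.injEq, Fin.ext_iff] at h
    exact Fin.ext (by omega)
  have hy : Function.Injective (yEdge : Fin b → Sym2 (Vert a b c)) := fun i j h => by
    simp only [yEdge, Sym2.eq_iff, Sum.inr.injEq, Sum.inl.injEq, Fin.ext_iff] at h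
    exact Fin.ext (by omega)
  rw [stdMatching, Finset.card_insert_of_notMem (by simp [xEdge, yEdge]),
    Finset.card_union_of_disjoint (by simp [Finset.disjoint_left, xEdge, yEdge]),
    Finset.card_image_of_injective _ hx, Finset.card_image_of_injective _ hy, Finset.card_univ,
    Fintype.card_fin]

theorem exists_mem_stdMatching_univ (k : Fin c) {p : Vert a b c}
    (hp : p ∉ insert w (Set.range z)) : ∃ e ∈ stdMatching Finset.univ k, p ∈ e := by
  simp only [Set.mem_insert_iff, Set.mem_range, not_or, not_exists] at hp
  rcases p with i | j | k' | ⟨⟨⟩⟩ | ⟨⟨⟩⟩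
  · refine ⟨xEdge ⟨i / 2, by omega⟩,
      mem_stdMatching.2 (Or.inr (Or.inl ⟨_, Finset.mem_univ _, rfl⟩)), ?_⟩
    simp only [xEdge, Sym2.mem_iff, Sum.inl.injEq, Fin.ext_iff]
    omega
  · obtain ⟨i, hi | hi⟩ := exists_y_eq_y₀_or_y₁ (a := a) (c := c) j <;>
      exact ⟨yEdge i, mem_stdMatching.2 (Or.inr (Or.inr ⟨i, rfl⟩)), Sym2.mem_iff.2 (by simp [hi])⟩
  · exact absurd rfl (hp.2 k')
  · exact ⟨_, mem_stdMatching.2 (Or.inl rfl), Sym2.mem_mk_left _ _⟩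
  · exact absurd rfl hp.1

theorem isIndepSet_insert_w_range_z : (G3 a b c).IsIndepSet (insert w (Set.range z)) := by
  rintro p (rfl | ⟨k, rfl⟩) q (rfl | ⟨k', rfl⟩) hpq
  · exact absurd rfl hpq
  · exact fun h => absurd (adj_z.1 h.symm) (by simp)
  · exact fun h => absurd (adj_z.1 h) (by simp)
  · exact fun h => absurd (adj_z.1 h) (by simp)

theorem isMaximalMatching_stdMatching (k : Fin c) :
    IsMaximalMatching (G3 a b c) (stdMatching Finset.univ k) := by
  refine isMaximalMatching_iff.2 ⟨isMatching_stdMatching _ _, fun p q h => ?_⟩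
  by_cases hp : p ∈ insert w (Set.range z)
  · by_cases hq : q ∈ insert w (Set.range z)
    · exact absurd h (isIndepSet_insert_w_range_z hp hq h.ne)
    · exact (exists_mem_stdMatching_univ k hq).imp fun e he => ⟨he.1, Or.inr he.2⟩
  · exact (exists_mem_stdMatching_univ k hp).imp fun e he => ⟨he.1, Or.inl he.2⟩

theorem isInducedMatching_stdMatching (i : Fin a) (k : Fin c) :
    IsInducedMatching (G3 a b c) (stdMatching {i} k) := by
  refine isInducedMatching_iff.2 ⟨isMatching_stdMatching _ _, fun e he f hf u hu u' hu' h => ?_⟩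
  have hmem {e : Sym2 (Vert a b c)} (he : e ∈ stdMatching {i} k) :
      e = s(v, z k) ∨ e = xEdge i ∨ ∃ j, e = yEdge j := by
    simpa [stdMatching, eq_comm] using he
  rcases hmem he with rfl | rfl | ⟨i₁, rfl⟩ <;> rcases hmem hf with rfl | rfl | ⟨i₂, rfl⟩ <;>
    simp only [xEdge, yEdge, Sym2.mem_iff] at hu hu' <;>
    rcases hu with rfl | rfl <;> rcases hu' with rfl | rfl <;>
    simp [G3, Fin.ext_iff] at h ⊢ <;> exact congrArg _ (Fin.ext (by omega))

theorem matchNum_eq (hc : 1 ≤ c) : matchNum (G3 a b c) = a + b + 1 := by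
  refine IsGreatest.csSup_eq ⟨⟨stdMatching Finset.univ ⟨0, hc⟩, isMatching_stdMatching _ _, ?_⟩,
    fun _ ⟨_, hM, hcard⟩ => hcard ▸ card_le_of_isMatching hM⟩
  simp [card_stdMatching]

theorem minMatchNum_eq (hc : 1 ≤ c) : minMatchNum (G3 a b c) = a + b + 1 := by
  refine IsLeast.csInf_eq ⟨⟨stdMatching Finset.univ ⟨0, hc⟩, isMaximalMatching_stdMatching _, ?_⟩,
    fun _ ⟨_, hM, hcard⟩ => hcard ▸ le_card_of_isMaximalMatching hc hM⟩
  simp [card_stdMatching]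

theorem indMatchNum_eq (ha : 1 ≤ a) (hc : 1 ≤ c) : indMatchNum (G3 a b c) = b + 2 := by
  refine IsGreatest.csSup_eq
    ⟨⟨stdMatching {⟨0, ha⟩} ⟨0, hc⟩, isInducedMatching_stdMatching _ _, ?_⟩,
      fun _ ⟨_, hM, hcard⟩ => hcard ▸ card_le_of_isInducedMatching hM⟩
  simp [card_stdMatching]
  omega

end G3

theorem G3_invariants (a b c : ℕ) (ha : 1 ≤ a) (hc : 1 ≤ c) :
    Fintype.card (Fin (2 * a) ⊕ Fin (2 * b) ⊕ Fin c ⊕ Unit ⊕ Unit) = 2 * a + 2 * b + c + 2 ∧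
      indMatchNum (G3 a b c) = b + 2 ∧
      minMatchNum (G3 a b c) = a + b + 1 ∧
      matchNum (G3 a b c) = a + b + 1 :=
  ⟨G3.card_vert, G3.indMatchNum_eq ha hc, G3.minMatchNum_eq hc, G3.matchNum_eq hc⟩

end MatchingPaper
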